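/- Let v : Fin 5 → ℙ(K^4) satisfy π(v)(I) = min(|I|, 2) for every I ⊆ Fin 5. Then there exist scalars p_0, p_1, q_0, q_1 ∈ K with p_0 p_1 (p_0 − p_1) ≠ 0, q_0 q_1 (q_0 − q_1) ≠ 0, and p_0 q_1 − p_1 q_0 ≠ 0, and a linear automorphism g of K^4 such that v_0 = g[e_0], v_1 = g[e_1], v_2 = g[e_0 + e_1], v_3 = g[p_0 e_0 + p_1 e_1], and v_4 = g[q_0 e_0 + q_1 e_1]. -/

import Mathlib

open scoped LinearAlgebra.Projectivization

/-- The subspace of `Fin n → K` spanned by the lines `v i` for `i ∈ I`. -/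
noncomputable def spanV {K : Type*} [Field K] {n m : ℕ}
    (v : Fin m → ℙ K (Fin n → K)) (I : Finset (Fin m)) : Submodule K (Fin n → K) :=
  ⨆ i ∈ I, (v i).submodule

/-- The rank matrix of a tuple of points in projective space. -/
noncomputable def rankMatrix {K : Type*} [Field K] {n m : ℕ}
    (v : Fin m → ℙ K (Fin n → K)) (I : Finset (Fin m)) : ℕ :=
  Module.finrank K (spanV v I)

lemma ne_zero_of_apply_ne_zero {K : Type*} [Field K] {n : ℕ} {u : Fin n → K} {i : Fin n}
    (h : u i ≠ 0) : u ≠ 0 := fun h0 => h (by rw [h0]; rfl)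

/-!
The rank conditions say that the five points are pairwise distinct and all lie on the
projective line spanned by `v 0` and `v 1`. In coordinates `(aⱼ, bⱼ)` of representatives
with respect to `(v 0).rep, (v 1).rep`, two points are distinct exactly when the determinant
of their coordinates is nonzero. Rescaling the two basis vectors so that `v 2` becomes `(1, 1)`
and extending them to a basis of `K⁴` gives `g`; the determinant conditions become the
conditions on `p` and `q`.
-/

open Module Submodule

theorem Projectivization.eq_mk_of_smul_rep_eq {K V : Type*} [DivisionRing K] [AddCommGroup V]
    [Module K V] {p : ℙ K V} {w : V} (hw : w ≠ 0) {c : K} (h : c • p.rep = w) :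
    p = mk K w hw := by
  rw [← p.mk_rep]
  exact ((mk_eq_mk_iff' K _ _ hw p.rep_nonzero).2 ⟨c, h⟩).symm

theorem Module.Basis.sumExtend_apply_inl {ι K V : Type*} [DivisionRing K] [AddCommGroup V]
    [Module K V] {v : ι → V} (hs : LinearIndependent K v) (i : ι) :
    Basis.sumExtend hs (Sum.inl i) = v i := by
  simp only [Basis.sumExtend, Basis.reindex_apply, Basis.coe_extend]
  rfl

theorem LinearIndependent.exists_basis_castAdd_eq {K V : Type*} [DivisionRing K]
    [AddCommGroup V] [Module K V] [FiniteDimensional K V] {k m : ℕ} (hV : finrank K V = k + m)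
    {w : Fin k → V} (hw : LinearIndependent K w) :
    ∃ b : Basis (Fin (k + m)) K V, ∀ i, b (Fin.castAdd m i) = w i := by
  let b := Basis.sumExtend hw
  have : Finite (Fin k ⊕ Basis.sumExtendIndex hw) := Module.Finite.finite_basis b
  have : Finite (Basis.sumExtendIndex hw) := .sum_right (Fin k)
  have hcard : Nat.card (Basis.sumExtendIndex hw) = m := by
    have := finrank_eq_nat_card_basis b
    rw [Nat.card_sum, Nat.card_eq_fintype_card, Fintype.card_fin] at this
    omega
  refine ⟨b.reindex ((Equiv.sumCongr (.refl _) (Finite.equivFinOfCardEq hcard)).trans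
    finSumFinEquiv), fun i => ?_⟩
  simp [b, Basis.sumExtend_apply_inl]

theorem exists_linearEquiv_fin_four_extending_pair {K V : Type*} [Field K] [AddCommGroup V]
    [Module K V] [FiniteDimensional K V] (hV : finrank K V = 4) {w₀ w₁ : V}
    (hw : LinearIndependent K ![w₀, w₁]) :
    ∃ g : (Fin 4 → K) ≃ₗ[K] V, ∀ c d : K, g ![c, d, 0, 0] = c • w₀ + d • w₁ := by
  obtain ⟨b, hb⟩ := hw.exists_basis_castAdd_eq (m := 2) hV
  refine ⟨b.equivFun.symm, fun c d => ?_⟩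
  have h₀ : b 0 = w₀ := hb 0
  have h₁ : b 1 = w₁ := hb 1
  simp [Fin.sum_univ_four, h₀, h₁]

theorem exists_normal_form_of_pairwise_linearIndependent {K V : Type*} [Field K]
    [AddCommGroup V] [Module K V]
    (u : Fin 5 → V) (hind : ∀ i j, i ≠ j → LinearIndependent K ![u i, u j])
    (hline : ∀ j, u j ∈ span K {u 0, u 1}) :
    ∃ p₀ p₁ q₀ q₁ : K, p₀ * p₁ * (p₀ - p₁) ≠ 0 ∧ q₀ * q₁ * (q₀ - q₁) ≠ 0 ∧
      p₀ * q₁ - p₁ * q₀ ≠ 0 ∧ ∃ w₀ w₁ : V, LinearIndependent K ![w₀, w₁] ∧ ∃ c : Fin 5 → K,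
        c 0 • u 0 = w₀ ∧ c 1 • u 1 = w₁ ∧ c 2 • u 2 = w₀ + w₁ ∧
        c 3 • u 3 = p₀ • w₀ + p₁ • w₁ ∧ c 4 • u 4 = q₀ • w₀ + q₁ • w₁ := by
  obtain ⟨a₂, b₂, h₂⟩ := mem_span_pair.1 (hline 2)
  obtain ⟨a₃, b₃, h₃⟩ := mem_span_pair.1 (hline 3)
  obtain ⟨a₄, b₄, h₄⟩ := mem_span_pair.1 (hline 4)
  set α : Fin 5 → K := ![1, 0, a₂, a₃, a₄]
  set β : Fin 5 → K := ![0, 1, b₂, b₃, b₄]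
  have hcoord : ∀ j, α j • u 0 + β j • u 1 = u j := by
    intro j; fin_cases j <;> simp [α, β, h₂, h₃, h₄]
  have hdet : ∀ i j, i ≠ j → α i * β j ≠ β i * α j := fun i j hij =>
    ((LinearIndependent.pair_add_smul_add_smul_iff _ _ _ _).1
      (by rw [hcoord, hcoord]; exact hind i j hij)).2
  have ha₂ : a₂ ≠ 0 := by simpa [α, β, eq_comm] using hdet 1 2 (by decide)
  have ha₃ : a₃ ≠ 0 := by simpa [α, β, eq_comm] using hdet 1 3 (by decide)
  have ha₄ : a₄ ≠ 0 := by simpa [α, β, eq_comm] using hdet 1 4 (by decide)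
  have hb₂ : b₂ ≠ 0 := by simpa [α, β] using hdet 0 2 (by decide)
  have hb₃ : b₃ ≠ 0 := by simpa [α, β] using hdet 0 3 (by decide)
  have hb₄ : b₄ ≠ 0 := by simpa [α, β] using hdet 0 4 (by decide)
  have h32 : a₃ * b₂ - b₃ * a₂ ≠ 0 := sub_ne_zero.2 (hdet 3 2 (by decide))
  have h42 : a₄ * b₂ - b₄ * a₂ ≠ 0 := sub_ne_zero.2 (hdet 4 2 (by decide))
  have h34 : a₃ * b₄ - b₃ * a₄ ≠ 0 := sub_ne_zero.2 (hdet 3 4 (by decide))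
  -- `(a₂ b₂) • u₃ = (a₃ b₂) • w₀ + (b₃ a₂) • w₁` is `u₃ = (a₃ / a₂) • w₀ + (b₃ / b₂) • w₁`
  -- with denominators cleared, and likewise for `u₄`.
  refine ⟨a₃ * b₂, b₃ * a₂, a₄ * b₂, b₄ * a₂, by simp [*], by simp [*], ?_,
    a₂ • u 0, b₂ • u 1, (LinearIndependent.pair_smul_smul_iff ha₂.isUnit hb₂.isUnit).2
      (hind 0 1 (by decide)), ![a₂, b₂, 1, a₂ * b₂, a₂ * b₂], by simp, by simp, ?_, ?_, ?_⟩
  · rw [show a₃ * b₂ * (b₄ * a₂) - b₃ * a₂ * (a₄ * b₂) = a₂ * b₂ * (a₃ * b₄ - b₃ * a₄) by ring]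
    simp [*]
  all_goals simp only [Matrix.cons_val, ← h₂, ← h₃, ← h₄]; module

section RankMatrix

variable {K : Type*} [Field K] {n m : ℕ} (v : Fin m → ℙ K (Fin n → K))

theorem spanV_insert (j : Fin m) (I : Finset (Fin m)) :
    spanV v (insert j I) = (v j).submodule ⊔ spanV v I :=
  Finset.iSup_insert _ _ _

theorem spanV_singleton (i : Fin m) : spanV v {i} = (v i).submodule :=
  Finset.iSup_singleton _ _

theorem spanV_pair (i j : Fin m) : spanV v {i, j} = span K {(v i).rep, (v j).rep} := by
  rw [spanV_insert, spanV_singleton, Projectivization.submodule_eq,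
    Projectivization.submodule_eq, span_insert]

theorem linearIndependent_rep_pair_of_rankMatrix_eq_two {i j : Fin m}
    (h : rankMatrix v {i, j} = 2) : LinearIndependent K ![(v i).rep, (v j).rep] := by
  refine Projectivization.linearIndependent_pair_iff_ne.2 fun hij => ?_
  rw [rankMatrix, spanV_insert, spanV_singleton, hij, sup_idem,
    Projectivization.finrank_submodule] at h
  omega

theorem rep_mem_spanV_of_rankMatrix_insert_eq {I : Finset (Fin m)} {j : Fin m}
    (h : rankMatrix v (insert j I) = rankMatrix v I) : (v j).rep ∈ spanV v I := by
  rw [eq_of_le_of_finrank_eq (spanV_insert v j I ▸ le_sup_right) h.symm, spanV_insert,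
    Projectivization.submodule_eq]
  exact mem_sup_left (mem_span_singleton_self _)

end RankMatrix

/-- normal form for quintuples of rank type (5). -/
theorem rank_5_normal_form (K : Type*) [Field K]
    (v : Fin 5 → ℙ K (Fin 4 → K))
    (h : ∀ I : Finset (Fin 5), rankMatrix v I = min I.card 2) :
    ∃ p₀ p₁ q₀ q₁ : K,
      ∃ hp : p₀ * p₁ * (p₀ - p₁) ≠ 0, ∃ hq : q₀ * q₁ * (q₀ - q₁) ≠ 0,
      ∃ hpq : p₀ * q₁ - p₁ * q₀ ≠ 0,
      ∃ g : (Fin 4 → K) ≃ₗ[K] (Fin 4 → K),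
        v 0 = Projectivization.mk K (g ![1,0,0,0])
            (g.map_ne_zero_iff.mpr (ne_zero_of_apply_ne_zero (i := 0) (by norm_num))) ∧
        v 1 = Projectivization.mk K (g ![0,1,0,0])
            (g.map_ne_zero_iff.mpr (ne_zero_of_apply_ne_zero (i := 1) (by norm_num))) ∧
        v 2 = Projectivization.mk K (g ![1,1,0,0])
            (g.map_ne_zero_iff.mpr (ne_zero_of_apply_ne_zero (i := 0) (by norm_num))) ∧
        v 3 = Projectivization.mk K (g ![p₀,p₁,0,0])
            (g.map_ne_zero_iff.mpr (ne_zero_of_apply_ne_zero (i := 0) (by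
              simpa using left_ne_zero_of_mul (left_ne_zero_of_mul hp)))) ∧
        v 4 = Projectivization.mk K (g ![q₀,q₁,0,0])
            (g.map_ne_zero_iff.mpr (ne_zero_of_apply_ne_zero (i := 0) (by
              simpa using left_ne_zero_of_mul (left_ne_zero_of_mul hq)))) := by
  have hind : ∀ i j : Fin 5, i ≠ j → LinearIndependent K ![(v i).rep, (v j).rep] :=
    fun i j hij => linearIndependent_rep_pair_of_rankMatrix_eq_two v
      (by rw [h, Finset.card_pair hij]; rfl)
  have hline : ∀ j, (v j).rep ∈ span K {(v 0).rep, (v 1).rep} := fun j => by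
    rw [← spanV_pair]
    refine rep_mem_spanV_of_rankMatrix_insert_eq v ?_
    rw [h, h]
    fin_cases j <;> rfl
  obtain ⟨p₀, p₁, q₀, q₁, hp, hq, hpq, w₀, w₁, hw, c, h₀, h₁, h₂, h₃, h₄⟩ :=
    exists_normal_form_of_pairwise_linearIndependent (fun i => (v i).rep) hind hline
  obtain ⟨g, hg⟩ := exists_linearEquiv_fin_four_extending_pair (finrank_fin_fun K) hw
  refine ⟨p₀, p₁, q₀, q₁, hp, hq, hpq, g, ?_, ?_, ?_, ?_, ?_⟩
  · exact Projectivization.eq_mk_of_smul_rep_eq _ (h₀.trans (by simp [hg]))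
  · exact Projectivization.eq_mk_of_smul_rep_eq _ (h₁.trans (by simp [hg]))
  · exact Projectivization.eq_mk_of_smul_rep_eq _ (h₂.trans (by simp [hg]))
  · exact Projectivization.eq_mk_of_smul_rep_eq _ (h₃.trans (hg _ _).symm)
  · exact Projectivization.eq_mk_of_smul_rep_eq _ (h₄.trans (hg _ _).symm)
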